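/- arXiv:2405.13223 — 3 statements merged into one kernel-verified Lean document; each statement's English description precedes it below -/
import Mathlib

section
/- Let n ≥ 2 and let A_2(n;1) = (Z/2^n) ⋊ Z/2, where the nontrivial element of Z/2 acts on Z/2^n by inversion. Under the inflation map H^2(A_2(n;1), F_2) → H^2(A_2(n+1;1), F_2) induced by the natural surjection A_2(n+1;1) → A_2(n;1), every class of degree two fully decomposes: the image of every element of H^2(A_2(n;1), F_2) is a finite sum of cup products of two degree-one classes in H^1(A_2(n+1;1), F_2). -/
/-!
A 2-cocycle `f` on `G = A₂(n;1)` with values in `F₂` defines a central extension `E` of `G` by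
`F₂`. Lift the generators `y = (1, 0)` and `x = (0, 1)` of `G` to `Y, X ∈ E`: then `X² = a`,
`XYX⁻¹ = c·Y⁻¹` and `Y^(2ⁿ) = b` for central `a, b, c`, so `Y^(2ⁿ⁺¹) = 1`. Hence `(i, j) ↦ Y^i X^j`
with `i ∈ Z/2ⁿ⁺¹` is a well-defined lift of the projection `A₂(n+1;1) → G` to `E`, multiplicative
up to the central factor `a·χ₂(g)χ₂(h) + c·χ₂(g)χ₁(h)`, where `χ₂` is the `C₂`-coordinate and `χ₁`
the parity of the cyclic coordinate. Comparing `F₂`-coordinates in `E` shows that the inflation of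
`f` is this sum of cup products plus the coboundary of the lift.
-/

open groupCohomology

noncomputable abbrev trivRep (p : ℕ) (G : Type) [Group G] : Rep (ZMod p) G :=
  Rep.trivial (ZMod p) G (ZMod p)

universe u

@[ext]
structure CocycleExtension {k G A : Type u} [CommRing k] [Group G] [AddCommGroup A] [Module k A]
    (_f : cocycles₂ (Rep.trivial k G A)) where
  coeff : A
  base : G

namespace CocycleExtension

variable {k G A : Type u} [CommRing k] [Group G] [AddCommGroup A] [Module k A]
  {f : cocycles₂ (Rep.trivial k G A)}

variable (f) in
lemma cocycle_eq (g h j : G) : (f (g * h, j) : A) + f (g, h) = f (h, j) + f (g, h * j) :=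
  (mem_cocycles₂_iff f).1 f.2 g h j

variable (f) in
lemma map_one_fst (g : G) : (f (1, g) : A) = f (1, 1) := cocycles₂_map_one_fst f g

variable (f) in
lemma map_one_snd (g : G) : (f (g, 1) : A) = f (1, 1) := cocycles₂_map_one_snd f g

-- With trivial coefficients `f (1, g) = f (1, 1)`, so `(-f (1, 1), 1)` is the identity.
instance : Group (CocycleExtension f) :=
  letI : Mul (CocycleExtension f) :=
    ⟨fun x y => ⟨x.coeff + y.coeff + f (x.base, y.base), x.base * y.base⟩⟩
  letI : One (CocycleExtension f) := ⟨⟨-f (1, 1), 1⟩⟩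
  letI : Inv (CocycleExtension f) :=
    ⟨fun x => ⟨-x.coeff - f (x.base⁻¹, x.base) - f (1, 1), x.base⁻¹⟩⟩
  Group.ofLeftAxioms
    (fun x y z => by
      ext
      · change x.coeff + y.coeff + f (x.base, y.base) + z.coeff + f (x.base * y.base, z.base) =
          x.coeff + (y.coeff + z.coeff + f (y.base, z.base)) + f (x.base, y.base * z.base)
        rw [eq_sub_of_add_eq (cocycle_eq f x.base y.base z.base)]
        abel
      · exact mul_assoc x.base y.base z.base)
    (fun x => by
      ext
      · change -f (1, 1) + x.coeff + f (1, x.base) = x.coeff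
        rw [map_one_fst f x.base]
        abel
      · exact one_mul x.base)
    (fun x => by
      ext
      · change -x.coeff - f (x.base⁻¹, x.base) - f (1, 1) + x.coeff + f (x.base⁻¹, x.base) =
          -f (1, 1)
        abel
      · exact inv_mul_cancel x.base)

@[simp] lemma mul_coeff (x y : CocycleExtension f) :
    (x * y).coeff = x.coeff + y.coeff + f (x.base, y.base) := rfl

@[simp] lemma mul_base (x y : CocycleExtension f) : (x * y).base = x.base * y.base := rfl

def baseHom : CocycleExtension f →* G where
  toFun := base
  map_one' := rfl
  map_mul' _ _ := rfl

@[simp] lemma pow_base (x : CocycleExtension f) (m : ℕ) : (x ^ m).base = x.base ^ m :=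
  map_pow baseHom x m

@[simp] lemma inv_base (x : CocycleExtension f) : x⁻¹.base = x.base⁻¹ := map_inv baseHom x

def central : Multiplicative A →* CocycleExtension f where
  toFun a := ⟨a.toAdd - f (1, 1), 1⟩
  map_one' := by ext; exacts [zero_sub _, rfl]
  map_mul' a b := by
    ext
    · change (a * b).toAdd - f (1, 1) = a.toAdd - f (1, 1) + (b.toAdd - f (1, 1)) + f (1, 1)
      rw [toAdd_mul]
      abel
    · exact (mul_one 1).symm

lemma central_mul_coeff (a : Multiplicative A) (x : CocycleExtension f) :
    (central a * x).coeff = a.toAdd + x.coeff := by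
  change a.toAdd - f (1, 1) + x.coeff + f (1, x.base) = _
  rw [map_one_fst f x.base]
  abel

lemma central_commute (a : Multiplicative A) (x : CocycleExtension f) :
    Commute (central a) x := by
  ext
  · rw [central_mul_coeff, mul_coeff]
    change _ = x.coeff + (a.toAdd - f (1, 1)) + f (x.base, 1)
    rw [map_one_snd f x.base]
    abel
  · exact (one_mul x.base).trans (mul_one x.base).symm

lemma exists_eq_central {x : CocycleExtension f} (hx : x.base = 1) :
    ∃ a : A, x = central (.ofAdd a) :=
  ⟨x.coeff + f (1, 1), by ext <;> simp [central, hx]⟩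

theorem pullback_eq_add_d₁₂ {G' : Type u} [Group G'] (π : G' → G)
    (Φ : G' → CocycleExtension f) (β : G' × G' → A) (hbase : ∀ g, (Φ g).base = π g)
    (hΦ : ∀ g h, Φ g * Φ h = central (.ofAdd (β (g, h))) * Φ (g * h)) :
    (fun x : G' × G' => (f (π x.1, π x.2) : A)) =
      β + (d₁₂ (Rep.trivial k G' A)).hom (fun g => -(Φ g).coeff) := by
  funext ⟨g, h⟩
  have hcoeff := congrArg coeff (hΦ g h)
  rw [mul_coeff, central_mul_coeff, hbase, hbase, toAdd_ofAdd] at hcoeff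
  simp only [Pi.add_apply, d₁₂_hom_apply, Representation.trivial_apply]
  rw [eq_sub_of_add_eq' hcoeff]
  abel

end CocycleExtension

section Dihedral

variable {M : ℕ} {E : Type*} [Group E]

def powValHom [NeZero M] (Y : E) (hY : Y ^ M = 1) : Multiplicative (ZMod M) →* E where
  toFun l := Y ^ l.toAdd.val
  map_one' := by simp
  map_mul' a b := by
    rw [toAdd_mul, ZMod.val_add, ← pow_eq_pow_mod _ hY, pow_add]

variable {φ : Multiplicative (ZMod 2) →* MulAut (Multiplicative (ZMod M))}

def rightChar (g : Multiplicative (ZMod M) ⋊[φ] Multiplicative (ZMod 2)) : ZMod 2 :=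
  g.right.toAdd

def leftParity (g : Multiplicative (ZMod M) ⋊[φ] Multiplicative (ZMod 2)) : ZMod 2 :=
  (g.left.toAdd.val : ZMod 2)

lemma rightChar_mul (g h : Multiplicative (ZMod M) ⋊[φ] Multiplicative (ZMod 2)) :
    rightChar (g * h) = rightChar g + rightChar h := rfl

lemma multiplicative_zmod_two_cases (r : Multiplicative (ZMod 2)) : r = 1 ∨ r = .ofAdd 1 := by
  revert r; decide

lemma leftParity_mul [NeZero M] (hM : 2 ∣ M) (hφ : ∀ y, φ (.ofAdd 1) y = y⁻¹)
    (g h : Multiplicative (ZMod M) ⋊[φ] Multiplicative (ZMod 2)) :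
    leftParity (g * h) = leftParity g + leftParity h := by
  have hcast : ∀ x : ZMod M, (x.val : ZMod 2) = ZMod.castHom hM _ x :=
    fun x => (ZMod.cast_eq_val x).symm
  simp only [leftParity, hcast, SemidirectProduct.mul_left, toAdd_mul, map_add]
  rcases multiplicative_zmod_two_cases g.right with hg | hg
  · rw [hg, map_one, MulAut.one_apply]
  · rw [hg, hφ, toAdd_inv, map_neg, ZModModule.neg_eq_self]

variable [NeZero M] {Y X : E} (hY : Y ^ M = 1)

def dihedralLift (X : E) (g : Multiplicative (ZMod M) ⋊[φ] Multiplicative (ZMod 2)) : E :=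
  powValHom Y hY g.left * X ^ g.right.toAdd.val

variable {ι : Multiplicative (ZMod 2) →* E} (hι : ∀ a x, Commute (ι a) x) {a c : ZMod 2}

lemma pow_val_mul_pow_val (hX : X ^ 2 = ι (.ofAdd a)) (r s : Multiplicative (ZMod 2)) :
    X ^ r.toAdd.val * X ^ s.toAdd.val =
      ι (.ofAdd (a * r.toAdd * s.toAdd)) * X ^ (r * s).toAdd.val := by
  have h1 : (1 : ZMod 2).val = 1 := rfl
  have h2 : (2 : ZMod 2).val = 0 := rfl
  rcases multiplicative_zmod_two_cases r with rfl | rfl <;>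
    rcases multiplicative_zmod_two_cases s with rfl | rfl <;>
    simp [h1, h2, ← pow_two, hX]

include hι in
lemma pow_val_mul_powValHom (hφ : ∀ y, φ (.ofAdd 1) y = y⁻¹)
    (hXY : X * Y * X⁻¹ = ι (.ofAdd c) * Y⁻¹) (r : Multiplicative (ZMod 2))
    (l : Multiplicative (ZMod M)) :
    X ^ r.toAdd.val * powValHom Y hY l =
      ι (.ofAdd (c * r.toAdd * l.toAdd.val)) * powValHom Y hY (φ r l) * X ^ r.toAdd.val := by
  rcases multiplicative_zmod_two_cases r with rfl | rfl
  · simp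
  · have hconj : X * Y ^ l.toAdd.val * X⁻¹ =
        ι (.ofAdd c) ^ l.toAdd.val * (Y ^ l.toAdd.val)⁻¹ := by
      rw [← conj_pow, hXY, (hι _ _).mul_pow, inv_pow]
    have h1 : (1 : ZMod 2).val = 1 := rfl
    rw [hφ, map_inv, toAdd_ofAdd, h1, pow_one, mul_one, mul_comm c, ← nsmul_eq_mul, ofAdd_nsmul,
      map_pow]
    exact mul_inv_eq_iff_eq_mul.mp hconj

include hι in
lemma dihedralLift_mul (hφ : ∀ y, φ (.ofAdd 1) y = y⁻¹) (hX : X ^ 2 = ι (.ofAdd a))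
    (hXY : X * Y * X⁻¹ = ι (.ofAdd c) * Y⁻¹)
    (g h : Multiplicative (ZMod M) ⋊[φ] Multiplicative (ZMod 2)) :
    dihedralLift hY X g * dihedralLift hY X h =
      ι (.ofAdd (a * rightChar g * rightChar h + c * rightChar g * leftParity h)) *
        dihedralLift hY X (g * h) := by
  calc dihedralLift hY X g * dihedralLift hY X h
      = powValHom Y hY g.left * (X ^ g.right.toAdd.val * powValHom Y hY h.left) *
          X ^ h.right.toAdd.val := by
        simp only [dihedralLift, mul_assoc]
    _ = powValHom Y hY g.left * (ι (.ofAdd (c * rightChar g * leftParity h)) *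
          powValHom Y hY (φ g.right h.left) * X ^ g.right.toAdd.val) * X ^ h.right.toAdd.val := by
        rw [pow_val_mul_powValHom hY hι hφ hXY]; rfl
    _ = ι (.ofAdd (c * rightChar g * leftParity h)) *
          (powValHom Y hY (g.left * φ g.right h.left) *
            (X ^ g.right.toAdd.val * X ^ h.right.toAdd.val)) := by
        simp only [map_mul, mul_assoc, ← (hι _ (powValHom Y hY g.left)).left_comm]
    _ = ι (.ofAdd (c * rightChar g * leftParity h)) * ι (.ofAdd (a * rightChar g * rightChar h)) *
          dihedralLift hY X (g * h) := by
        rw [pow_val_mul_pow_val hX, ← (hι _ _).left_comm, mul_assoc (ι _)]; rfl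
    _ = _ := by rw [← map_mul ι, ← ofAdd_add, add_comm]

end Dihedral

open CocycleExtension SemidirectProduct

theorem stmt15_general (n : ℕ)
    (φn : Multiplicative (ZMod 2) →* MulAut (Multiplicative (ZMod (2 ^ n))))
    (hφn : ∀ y, φn (Multiplicative.ofAdd 1) y = y⁻¹)
    (φn1 : Multiplicative (ZMod 2) →* MulAut (Multiplicative (ZMod (2 ^ (n + 1)))))
    (hφn1 : ∀ y, φn1 (Multiplicative.ofAdd 1) y = y⁻¹)
    (π : (Multiplicative (ZMod (2 ^ (n + 1))) ⋊[φn1] Multiplicative (ZMod 2)) →*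
         (Multiplicative (ZMod (2 ^ n)) ⋊[φn] Multiplicative (ZMod 2)))
    (hπ : ∀ x, π x =
      ⟨Multiplicative.ofAdd
          (ZMod.castHom (pow_dvd_pow 2 (Nat.le_succ n)) (ZMod (2 ^ n)) x.left.toAdd),
        x.right⟩) :
    ∀ f : (Multiplicative (ZMod (2 ^ n)) ⋊[φn] Multiplicative (ZMod 2)) ×
          (Multiplicative (ZMod (2 ^ n)) ⋊[φn] Multiplicative (ZMod 2)) → ZMod 2,
      f ∈ cocycles₂ (trivRep 2 (Multiplicative (ZMod (2 ^ n)) ⋊[φn] Multiplicative (ZMod 2))) →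
      ∃ (ℓ : ℕ)
        (χ ψ : Fin ℓ →
          (Multiplicative (ZMod (2 ^ (n + 1))) ⋊[φn1] Multiplicative (ZMod 2)) → ZMod 2),
        (∀ i, (∀ a b, χ i (a * b) = χ i a + χ i b) ∧ (∀ a b, ψ i (a * b) = ψ i a + ψ i b)) ∧
        ∃ φ' : (Multiplicative (ZMod (2 ^ (n + 1))) ⋊[φn1] Multiplicative (ZMod 2)) → ZMod 2,
          (fun x : (Multiplicative (ZMod (2 ^ (n + 1))) ⋊[φn1] Multiplicative (ZMod 2)) ×
                   (Multiplicative (ZMod (2 ^ (n + 1))) ⋊[φn1] Multiplicative (ZMod 2)) =>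
            f (π x.1, π x.2)) =
          (fun x => ∑ i, χ i x.1 * ψ i x.2) +
            (d₁₂ (trivRep 2 (Multiplicative (ZMod (2 ^ (n + 1))) ⋊[φn1] Multiplicative (ZMod 2)))).hom
              φ' := by
  intro f hf
  let F : cocycles₂ (trivRep 2 _) := ⟨f, hf⟩
  let Y : CocycleExtension F := ⟨0, inl (.ofAdd 1)⟩
  let X : CocycleExtension F := ⟨0, inr (.ofAdd 1)⟩
  obtain ⟨b, hb⟩ := exists_eq_central (x := Y ^ 2 ^ n) (by
    simp [Y, ← map_pow, ← ofAdd_nsmul])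
  obtain ⟨a, ha⟩ := exists_eq_central (x := X ^ 2) (by
    simp only [pow_base, X, ← map_pow]; rfl)
  obtain ⟨c, hc⟩ := exists_eq_central (x := X * Y * X⁻¹ * Y) (by
    simp only [X, Y, mul_base, inv_base]
    rw [← map_inv, ← inl_aut, hφn, ← map_mul, inv_mul_cancel, map_one])
  have hY : Y ^ 2 ^ (n + 1) = 1 := by
    rw [pow_succ, pow_mul, hb, ← map_pow, ← ofAdd_nsmul, two_nsmul, CharTwo.add_self_eq_zero,
      ofAdd_zero, map_one]
  have hbase : ∀ g, (dihedralLift hY X g).base = π g := by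
    intro g
    simp only [dihedralLift, powValHom, MonoidHom.coe_mk, OneHom.coe_mk, mul_base, pow_base, Y, X,
      hπ, ← map_pow, ← ofAdd_nsmul, nsmul_one]
    rw [ZMod.castHom_apply, ZMod.cast_eq_val, ZMod.natCast_zmod_val, ofAdd_toAdd]
    exact inl_left_mul_inr_right ⟨_, _⟩
  refine ⟨2, ![fun g => a * rightChar g, fun g => c * rightChar g], ![rightChar, leftParity], ?_,
    _, pullback_eq_add_d₁₂ π (dihedralLift hY X) _ hbase fun g h => ?_⟩
  · have hM : 2 ∣ 2 ^ (n + 1) := dvd_pow_self 2 n.succ_ne_zero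
    intro i
    fin_cases i <;> refine ⟨fun g h => ?_, fun g h => ?_⟩ <;>
      simp [rightChar_mul, leftParity_mul hM hφn1, mul_add]
  · rw [dihedralLift_mul hY central_commute hφn1 ha (eq_mul_inv_of_mul_eq hc) g h]
    simp [Fin.sum_univ_two, mul_assoc]

/-- Under inflation along the natural surjection `A₂(n+1;1) → A₂(n;1)` (where
`A₂(n;1) = Z/2ⁿ ⋊ Z/2` with the inversion action), every degree-two cohomology class fully
decomposes: its image is, up to a coboundary, a finite sum of cup products of two degree-one
classes (i.e. homomorphisms into `F_2`). -/
theorem stmt15 (n : ℕ) (hn : 2 ≤ n)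
    (φn : Multiplicative (ZMod 2) →* MulAut (Multiplicative (ZMod (2 ^ n))))
    (hφn : ∀ y, φn (Multiplicative.ofAdd 1) y = y⁻¹)
    (φn1 : Multiplicative (ZMod 2) →* MulAut (Multiplicative (ZMod (2 ^ (n + 1)))))
    (hφn1 : ∀ y, φn1 (Multiplicative.ofAdd 1) y = y⁻¹)
    (π : (Multiplicative (ZMod (2 ^ (n + 1))) ⋊[φn1] Multiplicative (ZMod 2)) →*
         (Multiplicative (ZMod (2 ^ n)) ⋊[φn] Multiplicative (ZMod 2)))
    (hπ : ∀ x, π x =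
      ⟨Multiplicative.ofAdd
          (ZMod.castHom (pow_dvd_pow 2 (Nat.le_succ n)) (ZMod (2 ^ n)) x.left.toAdd),
        x.right⟩) :
    ∀ f : (Multiplicative (ZMod (2 ^ n)) ⋊[φn] Multiplicative (ZMod 2)) ×
          (Multiplicative (ZMod (2 ^ n)) ⋊[φn] Multiplicative (ZMod 2)) → ZMod 2,
      f ∈ cocycles₂ (trivRep 2 (Multiplicative (ZMod (2 ^ n)) ⋊[φn] Multiplicative (ZMod 2))) →
      ∃ (ℓ : ℕ)
        (χ ψ : Fin ℓ →
          (Multiplicative (ZMod (2 ^ (n + 1))) ⋊[φn1] Multiplicative (ZMod 2)) → ZMod 2),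
        (∀ i, (∀ a b, χ i (a * b) = χ i a + χ i b) ∧ (∀ a b, ψ i (a * b) = ψ i a + ψ i b)) ∧
        ∃ φ' : (Multiplicative (ZMod (2 ^ (n + 1))) ⋊[φn1] Multiplicative (ZMod 2)) → ZMod 2,
          (fun x : (Multiplicative (ZMod (2 ^ (n + 1))) ⋊[φn1] Multiplicative (ZMod 2)) ×
                   (Multiplicative (ZMod (2 ^ (n + 1))) ⋊[φn1] Multiplicative (ZMod 2)) =>
            f (π x.1, π x.2)) =
          (fun x => ∑ i, χ i x.1 * ψ i x.2) +
            (d₁₂ (trivRep 2 (Multiplicative (ZMod (2 ^ (n + 1))) ⋊[φn1] Multiplicative (ZMod 2)))).hom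
              φ' :=
  stmt15_general n φn hφn φn1 hφn1 π hπ
end

section
/- Let p be an odd prime, let n ≥ 1 and k ≥ 1, and let B_p(n;1,k) = (Z/p^n) ⋊ Z/p^n, where a fixed generator x of the acting factor acts on Z/p^n by x y x^{-1} = y^{p^k+1}. Under the inflation map H^2(B_p(n;1,k), F_p) → H^2(B_p(n+1;1,k), F_p) induced by the natural surjection B_p(n+1;1,k) → B_p(n;1,k), every class of degree two fully decomposes: the image of every element of H^2(B_p(n;1,k), F_p) is a finite sum of cup products of two degree-one classes in H^1(B_p(n+1;1,k), F_p). -/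
/-
A 2-cocycle `g` with trivial coefficients on `G = B_p(n+1;1,k) = ⟨x, y⟩` is a coboundary as soon
as the central extension `E_g` it defines splits, and by the presentation of `G` this happens once
the lifts `X = (x, 0)` and `Y = (y, 0)` satisfy `X ^ p^(n+1) = Y ^ p^(n+1) = 1` and
`X Y X⁻¹ = Y ^ (p^k + 1)`. The power relation for `Y` amounts to `∑_{i < p^(n+1)} g (y^i, y) = 0`;
for an inflated cocycle this sum is `p` times a sum over `i < p^n`, because `y` has order `p^n`
downstairs, hence it vanishes mod `p` (likewise for `X`). The conjugation relation fails only by a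
central constant `c`, and subtracting `c • (χ ∪ ψ)`, where `χ` and `ψ` read off the `x`- and the
`y`-coordinate mod `p`, repairs it without disturbing the power relations.
-/

open groupCohomology

open Finset

universe u

section CentralExtension

variable {k G : Type u} [CommRing k] [Group G]

theorem mem_cocycles₂_trivial_iff (f : G × G → k) :
    f ∈ cocycles₂ (Rep.trivial k G k) ↔
      ∀ g h j, f (g * h, j) + f (g, h) = f (h, j) + f (g, h * j) := by
  simp [mem_cocycles₂_iff]

theorem cup_mem_cocycles₂ (χ ψ : G →* Multiplicative k) :
    (fun x : G × G => (χ x.1).toAdd * (ψ x.2).toAdd) ∈ cocycles₂ (Rep.trivial k G k) := by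
  rw [mem_cocycles₂_trivial_iff]
  intro g h j
  simp only [map_mul, toAdd_mul]
  ring

theorem comp_prodMap_mem_cocycles₂ {H : Type u} [Group H] (π : H →* G) {f : G × G → k}
    (hf : f ∈ cocycles₂ (Rep.trivial k G k)) :
    (fun x : H × H => f (π x.1, π x.2)) ∈ cocycles₂ (Rep.trivial k H k) := by
  rw [mem_cocycles₂_trivial_iff] at hf ⊢
  intro g h j
  simpa only [map_mul] using hf (π g) (π h) (π j)

@[ext]
structure CentralExt (f : cocycles₂ (Rep.trivial k G k)) where
  base : G
  coord : k

namespace CentralExt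

variable (f : cocycles₂ (Rep.trivial k G k))

theorem cocycle_eq (g h j : G) : f (g * h, j) + f (g, h) = f (h, j) + f (g, h * j) :=
  (mem_cocycles₂_trivial_iff f).1 f.2 g h j

theorem map_one_fst (g : G) : f (1, g) = f (1, 1) := by
  simpa using (cocycle_eq f 1 1 g).symm

theorem map_one_snd (g : G) : f (g, 1) = f (1, 1) := by
  simpa using cocycle_eq f g 1 1

-- `f` need not be normalized, so the identity sits at `-f (1, 1)`.
instance : Group (CentralExt f) where
  mul e e' := ⟨e.base * e'.base, e.coord + e'.coord + f (e.base, e'.base)⟩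
  one := ⟨1, -f (1, 1)⟩
  inv e := ⟨e.base⁻¹, -e.coord - f (e.base⁻¹, e.base) - f (1, 1)⟩
  mul_assoc := fun ⟨g₁, a₁⟩ ⟨g₂, a₂⟩ ⟨g₃, a₃⟩ => CentralExt.ext (mul_assoc g₁ g₂ g₃) <| by
    show a₁ + a₂ + f (g₁, g₂) + a₃ + f (g₁ * g₂, g₃) = a₁ + (a₂ + a₃ + f (g₂, g₃)) + f (g₁, g₂ * g₃)
    linear_combination cocycle_eq f g₁ g₂ g₃
  one_mul := fun ⟨g, a⟩ => CentralExt.ext (one_mul g) <| by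
    show -f (1, 1) + a + f (1, g) = a
    linear_combination map_one_fst f g
  mul_one := fun ⟨g, a⟩ => CentralExt.ext (mul_one g) <| by
    show a + -f (1, 1) + f (g, 1) = a
    linear_combination map_one_snd f g
  inv_mul_cancel := fun ⟨g, a⟩ => CentralExt.ext (inv_mul_cancel g) <| by
    show -a - f (g⁻¹, g) - f (1, 1) + a + f (g⁻¹, g) = -f (1, 1)
    ring

theorem mk_mul_mk (g h : G) (a b : k) :
    (⟨g, a⟩ * ⟨h, b⟩ : CentralExt f) = ⟨g * h, a + b + f (g, h)⟩ := rfl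

theorem one_def : (1 : CentralExt f) = ⟨1, -f (1, 1)⟩ := rfl

def baseHom : CentralExt f →* G where
  toFun := base
  map_one' := rfl
  map_mul' _ _ := rfl

theorem mk_pow (g : G) (a : k) (j : ℕ) :
    (⟨g, a⟩ : CentralExt f) ^ j = ⟨g ^ j, j • a + ∑ i ∈ range j, f (g ^ i, g) - f (1, 1)⟩ := by
  induction j with
  | zero => simp [one_def]
  | succ j ih =>
    rw [pow_succ, ih, mk_mul_mk, pow_succ, sum_range_succ, succ_nsmul]
    congr 1
    ring

theorem mk_pow_eq_one {g : G} {j : ℕ} (hg : g ^ j = 1)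
    (hsum : ∑ i ∈ range j, f (g ^ i, g) = 0) : (⟨g, 0⟩ : CentralExt f) ^ j = 1 := by
  rw [mk_pow, hg, hsum, one_def]
  simp

theorem eq_d₁₂_of_splitting (s : G →* CentralExt f) (hs : (baseHom f).comp s = MonoidHom.id G) :
    ⇑f = (d₁₂ (Rep.trivial k G k)).hom (fun g => -(s g).coord) := by
  funext x
  have hs (g : G) : (s g).base = g := DFunLike.congr_fun hs g
  have h : (s x.1 * s x.2).coord = (s (x.1 * x.2)).coord := by rw [map_mul]
  change (s x.1).coord + (s x.2).coord + f ((s x.1).base, (s x.2).base) = _ at h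
  rw [hs, hs] at h
  simp only [d₁₂_hom_apply, Representation.trivial_apply]
  linear_combination h

end CentralExt

end CentralExtension

theorem SemiconjBy.pow_pow_of_eq_pow {M : Type*} [Monoid M] {X Y : M} {m : ℕ}
    (h : SemiconjBy X Y (Y ^ m)) (r b : ℕ) : SemiconjBy (X ^ r) (Y ^ b) (Y ^ (m ^ r * b)) := by
  induction r generalizing b with
  | zero => simp
  | succ r ih =>
    rw [pow_succ, pow_succ, mul_assoc]
    exact (ih _).mul_left (by rw [pow_mul]; exact h.pow_right b)

theorem sum_range_mul_pow_of_pow_eq_one {M : Type*} [Monoid M] {A : Type*} [AddCommMonoid A]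
    {w : M} {L : ℕ} (hw : w ^ L = 1) (F : M → A) (q : ℕ) :
    ∑ i ∈ range (L * q), F (w ^ i) = q • ∑ i ∈ range L, F (w ^ i) := by
  induction q with
  | zero => simp
  | succ q ih =>
    simp only [mul_add_one, sum_range_add, ih, pow_add, pow_mul, hw, one_pow, one_mul, succ_nsmul]

section Cyclic

open Multiplicative

theorem ofAdd_one_pow_self (N : ℕ) : ofAdd (1 : ZMod N) ^ N = 1 := by
  rw [← ofAdd_nsmul, nsmul_one, ZMod.natCast_self, ofAdd_zero]

variable {N : ℕ} [NeZero N] {E : Type*} [Group E]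

theorem ofAdd_one_pow_val (z : Multiplicative (ZMod N)) : ofAdd (1 : ZMod N) ^ z.toAdd.val = z := by
  rw [← ofAdd_nsmul, nsmul_one, ZMod.natCast_zmod_val, ofAdd_toAdd]

theorem MonoidHom.ext_mzmod {F F' : Multiplicative (ZMod N) →* E}
    (h : F (ofAdd 1) = F' (ofAdd 1)) : F = F' := by
  refine MonoidHom.ext fun z => ?_
  rw [← ofAdd_one_pow_val z, map_pow, map_pow, h]

def zmodPowHom (Y : E) (hY : Y ^ N = 1) : Multiplicative (ZMod N) →* E where
  toFun z := Y ^ z.toAdd.val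
  map_one' := by simp
  map_mul' a b := by
    rw [toAdd_mul, ZMod.val_add, ← pow_add, ← pow_eq_pow_mod _ hY]

theorem zmodPowHom_apply (Y : E) (hY : Y ^ N = 1) (z : Multiplicative (ZMod N)) :
    zmodPowHom Y hY z = Y ^ z.toAdd.val := rfl

end Cyclic

section CyclicSemidirect

open Multiplicative SemidirectProduct

variable {N m : ℕ} {φ : Multiplicative (ZMod N) →* MulAut (Multiplicative (ZMod N))}
  {E : Type*} [Group E]

local notation "B" => Multiplicative (ZMod N) ⋊[φ] Multiplicative (ZMod N)

theorem map_ofAdd_one_pow_apply (hφ : ∀ y, φ (ofAdd 1) y = y ^ m) (r : ℕ)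
    (z : Multiplicative (ZMod N)) : φ (ofAdd 1 ^ r) z = z ^ (m ^ r) := by
  induction r generalizing z with
  | zero => simp
  | succ r ih => rw [pow_succ, map_mul, MulAut.mul_apply, hφ, ih, ← pow_mul, pow_succ']

theorem semiconjBy_inr_inl (hφ : ∀ y, φ (ofAdd 1) y = y ^ m) :
    SemiconjBy (inr (ofAdd 1) : B) (inl (ofAdd 1)) (inl (ofAdd 1) ^ m) := by
  rw [SemiconjBy, ← map_pow, ← hφ, inl_aut, map_inv, inv_mul_cancel_right]

variable (φ) in
def rightModHom {q : ℕ} (hq : q ∣ N) : B →* Multiplicative (ZMod q) :=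
  (ZMod.castHom hq (ZMod q)).toAddMonoidHom.toMultiplicative.comp rightHom

theorem rightModHom_apply {q : ℕ} (hq : q ∣ N) (u : B) :
    (rightModHom φ hq u).toAdd = ZMod.castHom hq (ZMod q) u.right.toAdd := rfl

variable [NeZero N]

theorem map_apply_eq_pow (hφ : ∀ y, φ (ofAdd 1) y = y ^ m) (g z : Multiplicative (ZMod N)) :
    φ g z = z ^ (m ^ g.toAdd.val) := by
  conv_lhs => rw [← ofAdd_one_pow_val g]
  exact map_ofAdd_one_pow_apply hφ _ z

theorem hom_ext_ofAdd_one {F F' : B →* E} (hl : F (inl (ofAdd 1)) = F' (inl (ofAdd 1)))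
    (hr : F (inr (ofAdd 1)) = F' (inr (ofAdd 1))) : F = F' :=
  SemidirectProduct.hom_ext (MonoidHom.ext_mzmod hl) (MonoidHom.ext_mzmod hr)

def liftOfSemiconj (hφ : ∀ y, φ (ofAdd 1) y = y ^ m) {X Y : E} (hX : X ^ N = 1) (hY : Y ^ N = 1)
    (h : SemiconjBy X Y (Y ^ m)) : B →* E :=
  lift (zmodPowHom Y hY) (zmodPowHom X hX) fun g => by
    refine MonoidHom.ext fun z => ?_
    change zmodPowHom Y hY (φ g z) = X ^ g.toAdd.val * Y ^ z.toAdd.val * (X ^ g.toAdd.val)⁻¹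
    rw [map_apply_eq_pow hφ, map_pow, zmodPowHom_apply, ← pow_mul, mul_comm,
      (h.pow_pow_of_eq_pow _ _).eq, mul_inv_cancel_right]

theorem liftOfSemiconj_inl (hφ : ∀ y, φ (ofAdd 1) y = y ^ m) {X Y : E} (hX : X ^ N = 1)
    (hY : Y ^ N = 1) (h : SemiconjBy X Y (Y ^ m)) :
    liftOfSemiconj hφ hX hY h (inl (ofAdd 1)) = Y := by
  rw [liftOfSemiconj, lift_inl, zmodPowHom_apply, toAdd_ofAdd, ZMod.val_one_eq_one_mod,
    ← pow_eq_pow_mod 1 hY, pow_one]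

theorem liftOfSemiconj_inr (hφ : ∀ y, φ (ofAdd 1) y = y ^ m) {X Y : E} (hX : X ^ N = 1)
    (hY : Y ^ N = 1) (h : SemiconjBy X Y (Y ^ m)) :
    liftOfSemiconj hφ hX hY h (inr (ofAdd 1)) = X := by
  rw [liftOfSemiconj, lift_inr, zmodPowHom_apply, toAdd_ofAdd, ZMod.val_one_eq_one_mod,
    ← pow_eq_pow_mod 1 hX, pow_one]

def leftModHom (hφ : ∀ y, φ (ofAdd 1) y = y ^ m) {q : ℕ} (hq : q ∣ N) (hm : (m : ZMod q) = 1) :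
    B →* Multiplicative (ZMod q) :=
  lift (ZMod.castHom hq (ZMod q)).toAddMonoidHom.toMultiplicative 1 fun g => by
    refine MonoidHom.ext fun z => ?_
    change ofAdd (ZMod.castHom hq (ZMod q) (φ g z).toAdd)
      = 1 * ofAdd (ZMod.castHom hq (ZMod q) z.toAdd) * 1⁻¹
    rw [map_apply_eq_pow hφ, toAdd_pow, nsmul_eq_mul, map_mul, map_natCast, Nat.cast_pow, hm,
      one_pow, one_mul, one_mul, inv_one, mul_one]

theorem leftModHom_apply (hφ : ∀ y, φ (ofAdd 1) y = y ^ m) {q : ℕ} (hq : q ∣ N)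
    (hm : (m : ZMod q) = 1) (u : B) :
    (leftModHom hφ hq hm u).toAdd = ZMod.castHom hq (ZMod q) u.left.toAdd := by
  simp [leftModHom, lift]

theorem exists_eq_d₁₂_of_relations {k : Type} [CommRing k] (hφ : ∀ y, φ (ofAdd 1) y = y ^ m)
    (h : cocycles₂ (Rep.trivial k B k)) (hX : (⟨inr (ofAdd 1), 0⟩ : CentralExt h) ^ N = 1)
    (hY : (⟨inl (ofAdd 1), 0⟩ : CentralExt h) ^ N = 1)
    (hXY : SemiconjBy (⟨inr (ofAdd 1), 0⟩ : CentralExt h) ⟨inl (ofAdd 1), 0⟩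
      (⟨inl (ofAdd 1), 0⟩ ^ m)) :
    ∃ φ' : B → k, ⇑h = (d₁₂ (Rep.trivial k B k)).hom φ' := by
  set s := liftOfSemiconj hφ hX hY hXY
  have hs : (CentralExt.baseHom h).comp s = MonoidHom.id B :=
    hom_ext_ofAdd_one (congrArg CentralExt.base (liftOfSemiconj_inl hφ hX hY hXY))
      (congrArg CentralExt.base (liftOfSemiconj_inr hφ hX hY hXY))
  exact ⟨_, CentralExt.eq_d₁₂_of_splitting h s hs⟩

theorem exists_eq_smul_cup_add_d₁₂ (hφ : ∀ y, φ (ofAdd 1) y = y ^ m) {q : ℕ} (hq : q ∣ N)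
    (hm : (m : ZMod q) = 1) (g : cocycles₂ (Rep.trivial (ZMod q) B (ZMod q)))
    (hy : ∑ i ∈ range N, g (inl (ofAdd 1) ^ i, inl (ofAdd 1)) = 0)
    (hx : ∑ i ∈ range N, g (inr (ofAdd 1) ^ i, inr (ofAdd 1)) = 0) :
    ∃ (c : ZMod q) (φ' : B → ZMod q),
      ⇑g = c • (fun u => (rightModHom φ hq u.1).toAdd * (leftModHom hφ hq hm u.2).toAdd) +
        (d₁₂ (Rep.trivial (ZMod q) B (ZMod q))).hom φ' := by
  set y : B := inl (ofAdd 1)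
  set x : B := inr (ofAdd 1)
  set χ := rightModHom φ hq
  set ψ := leftModHom hφ hq hm
  have hχy (i : ℕ) : (χ (y ^ i)).toAdd = 0 := by
    rw [rightModHom_apply, ← map_pow, right_inl, toAdd_one, map_zero]
  have hψx : (ψ x).toAdd = 0 := by rw [leftModHom_apply, left_inr, toAdd_one, map_zero]
  have hχ1 : (χ 1).toAdd = 0 := by rw [map_one, toAdd_one]
  have hχx : (χ x).toAdd = 1 := by rw [rightModHom_apply, right_inr, toAdd_ofAdd, map_one]
  have hψy : (ψ y).toAdd = 1 := by rw [leftModHom_apply, left_inl, toAdd_ofAdd, map_one]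
  -- `c` is the central defect of the relation `x y = y ^ m x` among the lifts `(x, 0)`, `(y, 0)`.
  set c : ZMod q := g (x, y) - ∑ i ∈ range m, g (y ^ i, y) + g (1, 1) - g (y ^ m, x)
  let h : cocycles₂ (Rep.trivial (ZMod q) B (ZMod q)) :=
    g - c • ⟨_, cup_mem_cocycles₂ χ ψ⟩
  have hval (u v : B) : h (u, v) = g (u, v) - c * ((χ u).toAdd * (ψ v).toAdd) := rfl
  have hY : (⟨y, 0⟩ : CentralExt h) ^ N = 1 := by
    refine CentralExt.mk_pow_eq_one h (by rw [← map_pow, ofAdd_one_pow_self _, map_one]) ?_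
    simpa only [hval, hχy, zero_mul, mul_zero, sub_zero] using hy
  have hX : (⟨x, 0⟩ : CentralExt h) ^ N = 1 := by
    refine CentralExt.mk_pow_eq_one h (by rw [← map_pow, ofAdd_one_pow_self _, map_one]) ?_
    simpa only [hval, hψx, mul_zero, sub_zero] using hx
  have hXY : SemiconjBy (⟨x, 0⟩ : CentralExt h) ⟨y, 0⟩ (⟨y, 0⟩ ^ m) := by
    rw [SemiconjBy, CentralExt.mk_pow, CentralExt.mk_mul_mk, CentralExt.mk_mul_mk]
    congr 1
    · exact semiconjBy_inr_inl hφ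
    · simp only [hval, hχy, hχ1, hχx, hψy, zero_mul, mul_zero, sub_zero, mul_one, smul_zero]
      ring
  obtain ⟨φ', hφ'⟩ := exists_eq_d₁₂_of_relations hφ h hX hY hXY
  refine ⟨c, φ', ?_⟩
  rw [← hφ']
  funext u
  simp [hval]

end CyclicSemidirect

theorem stmt16_general (p : ℕ) [Fact p.Prime] (n k : ℕ) (hk : 1 ≤ k)
    (φn : Multiplicative (ZMod (p ^ n)) →* MulAut (Multiplicative (ZMod (p ^ n))))
    (φn1 : Multiplicative (ZMod (p ^ (n + 1))) →* MulAut (Multiplicative (ZMod (p ^ (n + 1)))))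
    (hφn1 : ∀ y, φn1 (Multiplicative.ofAdd 1) y = y ^ (p ^ k + 1))
    (π : (Multiplicative (ZMod (p ^ (n + 1))) ⋊[φn1] Multiplicative (ZMod (p ^ (n + 1)))) →*
         (Multiplicative (ZMod (p ^ n)) ⋊[φn] Multiplicative (ZMod (p ^ n))))
    (hπ : ∀ x, π x =
      ⟨Multiplicative.ofAdd
          (ZMod.castHom (pow_dvd_pow p (Nat.le_succ n)) (ZMod (p ^ n)) x.left.toAdd),
        Multiplicative.ofAdd
          (ZMod.castHom (pow_dvd_pow p (Nat.le_succ n)) (ZMod (p ^ n)) x.right.toAdd)⟩) :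
    ∀ f : (Multiplicative (ZMod (p ^ n)) ⋊[φn] Multiplicative (ZMod (p ^ n))) ×
          (Multiplicative (ZMod (p ^ n)) ⋊[φn] Multiplicative (ZMod (p ^ n))) → ZMod p,
      f ∈ cocycles₂
        (trivRep p (Multiplicative (ZMod (p ^ n)) ⋊[φn] Multiplicative (ZMod (p ^ n)))) →
      ∃ (ℓ : ℕ)
        (χ ψ : Fin ℓ →
          (Multiplicative (ZMod (p ^ (n + 1))) ⋊[φn1] Multiplicative (ZMod (p ^ (n + 1)))) →
            ZMod p),
        (∀ i, (∀ a b, χ i (a * b) = χ i a + χ i b) ∧ (∀ a b, ψ i (a * b) = ψ i a + ψ i b)) ∧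
        ∃ φ' : (Multiplicative (ZMod (p ^ (n + 1))) ⋊[φn1]
            Multiplicative (ZMod (p ^ (n + 1)))) → ZMod p,
          (fun x : (Multiplicative (ZMod (p ^ (n + 1))) ⋊[φn1]
                     Multiplicative (ZMod (p ^ (n + 1)))) ×
                   (Multiplicative (ZMod (p ^ (n + 1))) ⋊[φn1]
                     Multiplicative (ZMod (p ^ (n + 1)))) =>
            f (π x.1, π x.2)) =
          (fun x => ∑ i, χ i x.1 * ψ i x.2) +
            (d₁₂ (trivRep p (Multiplicative (ZMod (p ^ (n + 1))) ⋊[φn1]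
              Multiplicative (ZMod (p ^ (n + 1)))))).hom φ' := by
  intro f hf
  let g : cocycles₂ (trivRep p _) := ⟨_, comp_prodMap_mem_cocycles₂ π hf⟩
  have hsum {w} (hw : w ^ p ^ n = 1) (w' : _) (hw' : π w' = w) :
      ∑ i ∈ range (p ^ (n + 1)), g (w' ^ i, w') = 0 := by
    change ∑ i ∈ range (p ^ (n + 1)), f (π (w' ^ i), π w') = 0
    simp only [map_pow, hw']
    -- `i ↦ f (w ^ i, w)` has period `p ^ n`
    rw [pow_succ, sum_range_mul_pow_of_pow_eq_one hw (fun v => f (v, w)), nsmul_eq_mul,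
      ZMod.natCast_self, zero_mul]
  have hπy : π (.inl (.ofAdd 1)) = .inl (.ofAdd 1) := by
    rw [hπ]; ext <;> simp [-ZMod.castHom_apply]
  have hπx : π (.inr (.ofAdd 1)) = .inr (.ofAdd 1) := by
    rw [hπ]; ext <;> simp [-ZMod.castHom_apply]
  have hm : ((p ^ k + 1 : ℕ) : ZMod p) = 1 := by
    rw [Nat.cast_add, Nat.cast_pow, ZMod.natCast_self, zero_pow (by omega), zero_add, Nat.cast_one]
  have hpN : p ∣ p ^ (n + 1) := dvd_pow_self p n.succ_ne_zero
  obtain ⟨c, φ', hg⟩ := exists_eq_smul_cup_add_d₁₂ hφn1 hpN hm g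
    (hsum (by rw [← map_pow, ofAdd_one_pow_self _, map_one]) _ hπy)
    (hsum (by rw [← map_pow, ofAdd_one_pow_self _, map_one]) _ hπx)
  refine ⟨1, fun _ u => c * (rightModHom φn1 hpN u).toAdd,
    fun _ v => (leftModHom hφn1 hpN hm v).toAdd,
    fun _ => ⟨fun a b => by simp [mul_add], fun a b => by simp⟩, φ', ?_⟩
  change ⇑g = _
  rw [hg]
  funext u
  simp [mul_assoc]

/-- Under inflation along the natural surjection `B_p(n+1;1,k) → B_p(n;1,k)` (where
`B_p(n;1,k) = Z/pⁿ ⋊ Z/pⁿ`, a fixed generator `x` of the acting factor acting by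
`x y x⁻¹ = y^{pᵏ+1}`), every degree-two cohomology class fully decomposes: its image is,
up to a coboundary, a finite sum of cup products of two degree-one classes. -/
theorem stmt16 (p : ℕ) [Fact p.Prime] (hp : Odd p) (n k : ℕ) (hn : 1 ≤ n) (hk : 1 ≤ k)
    (φn : Multiplicative (ZMod (p ^ n)) →* MulAut (Multiplicative (ZMod (p ^ n))))
    (hφn : ∀ y, φn (Multiplicative.ofAdd 1) y = y ^ (p ^ k + 1))
    (φn1 : Multiplicative (ZMod (p ^ (n + 1))) →* MulAut (Multiplicative (ZMod (p ^ (n + 1)))))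
    (hφn1 : ∀ y, φn1 (Multiplicative.ofAdd 1) y = y ^ (p ^ k + 1))
    (π : (Multiplicative (ZMod (p ^ (n + 1))) ⋊[φn1] Multiplicative (ZMod (p ^ (n + 1)))) →*
         (Multiplicative (ZMod (p ^ n)) ⋊[φn] Multiplicative (ZMod (p ^ n))))
    (hπ : ∀ x, π x =
      ⟨Multiplicative.ofAdd
          (ZMod.castHom (pow_dvd_pow p (Nat.le_succ n)) (ZMod (p ^ n)) x.left.toAdd),
        Multiplicative.ofAdd
          (ZMod.castHom (pow_dvd_pow p (Nat.le_succ n)) (ZMod (p ^ n)) x.right.toAdd)⟩) :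
    ∀ f : (Multiplicative (ZMod (p ^ n)) ⋊[φn] Multiplicative (ZMod (p ^ n))) ×
          (Multiplicative (ZMod (p ^ n)) ⋊[φn] Multiplicative (ZMod (p ^ n))) → ZMod p,
      f ∈ cocycles₂
        (trivRep p (Multiplicative (ZMod (p ^ n)) ⋊[φn] Multiplicative (ZMod (p ^ n)))) →
      ∃ (ℓ : ℕ)
        (χ ψ : Fin ℓ →
          (Multiplicative (ZMod (p ^ (n + 1))) ⋊[φn1] Multiplicative (ZMod (p ^ (n + 1)))) →
            ZMod p),
        (∀ i, (∀ a b, χ i (a * b) = χ i a + χ i b) ∧ (∀ a b, ψ i (a * b) = ψ i a + ψ i b)) ∧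
        ∃ φ' : (Multiplicative (ZMod (p ^ (n + 1))) ⋊[φn1]
            Multiplicative (ZMod (p ^ (n + 1)))) → ZMod p,
          (fun x : (Multiplicative (ZMod (p ^ (n + 1))) ⋊[φn1]
                     Multiplicative (ZMod (p ^ (n + 1)))) ×
                   (Multiplicative (ZMod (p ^ (n + 1))) ⋊[φn1]
                     Multiplicative (ZMod (p ^ (n + 1)))) =>
            f (π x.1, π x.2)) =
          (fun x => ∑ i, χ i x.1 * ψ i x.2) +
            (d₁₂ (trivRep p (Multiplicative (ZMod (p ^ (n + 1))) ⋊[φn1]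
              Multiplicative (ZMod (p ^ (n + 1)))))).hom φ' :=
  stmt16_general p n k hk φn φn1 hφn1 π hπ
end

section
/- Let n ≥ 2 and d ≥ 1, and let A_2(n;d) = (C_{2^n})^d ⋊ C_2 with the inversion action. Then every class γ ∈ H^2(A_2(n;d), F_2) fully decomposes in H^2(A_2(n+1;d), F_2) under the inflation map induced by the natural surjection A_2(n+1;d) → A_2(n;d); that is, the inflation of γ is a finite sum of cup products of two degree-one classes. -/
/-!
Pull the cocycle back along `π` to `G = A₂(n+1;d)` and let `E` be the central extension of `G` by
`ZMod 2` that it defines, with central inclusion `ι`; lift the generators `eᵢ, x` of `G` to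
`ẽᵢ, x̃ ∈ E`. The relations of `G` hold in `E` up to central factors, and `ẽᵢ ^ 2ⁿ⁺¹ = 1` holds on
the nose: `eᵢ ^ 2ⁿ` maps to `1` in `A₂(n;d)`, so the inflated cocycle vanishes at
`(eᵢ ^ 2ⁿ, eᵢ ^ 2ⁿ)`. Hence the exponents of the normal-form section
`s g = ∏ ẽᵢ ^ mᵢ(g) * x̃ ^ ε(g)` may be reduced modulo `2ⁿ⁺¹`, and
`s g * s h = ι (B g h) * s (g h)`, where `B` collects the central factors coming from `x̃ ^ 2`, the
`x̃ ẽᵢ x̃⁻¹ ẽᵢ` and the commutators `[ẽᵢ, ẽⱼ]`, weighted by products of parities of `mᵢ` and `ε`.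
So `B` is bilinear, hence a sum of cup products of the degree-one classes dual to the generators,
and the cocycle differs from `B` by the coboundary of `s`.
-/

open groupCohomology

open Multiplicative SemidirectProduct

theorem pow_mul_pow_eq_of_mul_eq {M : Type*} [Monoid M] {a b z : M} (ha : Commute z a)
    (hb : Commute z b) (h : a * b = z * (b * a)) (k l : ℕ) :
    a ^ k * b ^ l = z ^ (k * l) * (b ^ l * a ^ k) := by
  have mul_pow : ∀ l : ℕ, a * b ^ l = z ^ l * (b ^ l * a) := by
    intro l
    induction l with
    | zero => simp
    | succ l ih =>
      calc a * b ^ (l + 1) = z ^ l * (b ^ l * (a * b)) := by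
            rw [pow_succ, ← mul_assoc, ih, mul_assoc, mul_assoc]
        _ = z ^ (l + 1) * (b ^ (l + 1) * a) := by
            rw [h, ← mul_assoc (b ^ l), (hb.pow_right l).symm.eq, pow_succ, pow_succ]
            simp only [mul_assoc]
  induction k with
  | zero => simp
  | succ k ih =>
    calc a ^ (k + 1) * b ^ l = a ^ k * (a * b ^ l) := by rw [pow_succ, mul_assoc]
      _ = z ^ l * (a ^ k * b ^ l * a) := by
          rw [mul_pow, ← mul_assoc, ← ((ha.pow_right k).pow_left l).eq, mul_assoc, mul_assoc]
      _ = z ^ ((k + 1) * l) * (b ^ l * a ^ (k + 1)) := by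
          rw [ih, mul_assoc, ← mul_assoc, ← pow_add, pow_succ, add_mul, one_mul, add_comm,
            mul_assoc]

def orderedPairSum {κ M : Type*} [AddCommMonoid M] (W : κ → κ → M) : List κ → M
  | [] => 0
  | i :: t => (t.map (W i)).sum + orderedPairSum W t

theorem orderedPairSum_add {κ M : Type*} [AddCommMonoid M] (W W' : κ → κ → M) (l : List κ) :
    orderedPairSum (fun i j => W i j + W' i j) l = orderedPairSum W l + orderedPairSum W' l := by
  induction l with
  | nil => simp [orderedPairSum]
  | cons i t ih =>
    simp only [orderedPairSum, ih, List.sum_map_add]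
    abel

theorem map_one_eq_zero_of_map_mul {G R : Type*} [Group G] [AddGroup R] {f : G → R}
    (hf : ∀ a b, f (a * b) = f a + f b) : f 1 = 0 := by
  simpa using hf 1 1

theorem eq_sum_mul_of_closure_eq_top {G R ι : Type*} [Group G] [Ring R] [Fintype ι]
    [DecidableEq ι] {γ : ι → G} (hγ : Subgroup.closure (Set.range γ) = ⊤) {χ : ι → G → R}
    (hχ : ∀ α a b, χ α (a * b) = χ α a + χ α b) (hχγ : ∀ α β, χ α (γ β) = if α = β then 1 else 0)
    {L : G → R} (hL : ∀ a b, L (a * b) = L a + L b) (g : G) :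
    L g = ∑ α, χ α g * L (γ α) := by
  have map_inv : ∀ {f : G → R}, (∀ a b, f (a * b) = f a + f b) → ∀ a, f a⁻¹ = -f a :=
    fun hf a => eq_neg_of_add_eq_zero_left <| by
      rw [← hf, inv_mul_cancel, map_one_eq_zero_of_map_mul hf]
  have hg : g ∈ Subgroup.closure (Set.range γ) := hγ ▸ Subgroup.mem_top g
  induction hg using Subgroup.closure_induction with
  | mem _ h =>
    obtain ⟨β, rfl⟩ := h
    simp [hχγ]
  | one => simp [map_one_eq_zero_of_map_mul hL, map_one_eq_zero_of_map_mul (hχ _)]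
  | mul a b _ _ ha hb => simp [hL, hχ, ha, hb, add_mul, Finset.sum_add_distrib]
  | inv a _ ha => simp [map_inv hL, map_inv (hχ _), ha]

theorem exists_fin_sum_mul_of_bimul {G R ι : Type*} [Group G] [CommRing R] [Fintype ι]
    [DecidableEq ι] {γ : ι → G} (hγ : Subgroup.closure (Set.range γ) = ⊤) {χ : ι → G → R}
    (hχ : ∀ α a b, χ α (a * b) = χ α a + χ α b) (hχγ : ∀ α β, χ α (γ β) = if α = β then 1 else 0)
    {B : G → G → R} (hB₁ : ∀ g g' h, B (g * g') h = B g h + B g' h)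
    (hB₂ : ∀ g h h', B g (h * h') = B g h + B g h') :
    ∃ (ℓ : ℕ) (χ' ψ' : Fin ℓ → G → R),
      (∀ i, (∀ a b, χ' i (a * b) = χ' i a + χ' i b) ∧ (∀ a b, ψ' i (a * b) = ψ' i a + ψ' i b)) ∧
      ∀ g h, B g h = ∑ i, χ' i g * ψ' i h := by
  let p := (Fintype.equivFin (ι × ι)).symm
  refine ⟨_, fun i g => χ (p i).1 g * B (γ (p i).1) (γ (p i).2), fun i h => χ (p i).2 h,
    fun i => ⟨fun a b => by simp only [hχ, add_mul], fun a b => hχ _ a b⟩, fun g h => ?_⟩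
  calc B g h = ∑ α, χ α g * B (γ α) h :=
        eq_sum_mul_of_closure_eq_top hγ hχ hχγ (L := (B · h)) (hB₁ · · h) g
    _ = ∑ q : ι × ι, χ q.1 g * B (γ q.1) (γ q.2) * χ q.2 h := by
        rw [Fintype.sum_prod_type]
        refine Finset.sum_congr rfl fun α _ => ?_
        rw [eq_sum_mul_of_closure_eq_top hγ hχ hχγ (hB₂ (γ α)) h, Finset.mul_sum]
        exact Finset.sum_congr rfl fun β _ => by ring
    _ = _ := (Fintype.sum_equiv p _ _ fun _ => rfl).symm

structure NormCocycle₂ (G A : Type*) [Group G] [AddCommGroup A] where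
  toFun : G × G → A
  map_mul_add : ∀ g h k : G, toFun (g * h, k) + toFun (g, h) = toFun (h, k) + toFun (g, h * k)
  map_one_one : toFun (1, 1) = 0

namespace NormCocycle₂

universe u

variable {G : Type u} {A : Type*} [Group G] [AddCommGroup A] (c : NormCocycle₂ G A)

instance : CoeFun (NormCocycle₂ G A) (fun _ => G × G → A) := ⟨toFun⟩

@[simp] theorem map_one_left (g : G) : c (1, g) = 0 := by
  have h := c.map_mul_add 1 1 g
  simp only [one_mul] at h
  rw [← c.map_one_one]
  exact (add_left_cancel h).symm

@[simp] theorem map_one_right (g : G) : c (g, 1) = 0 := by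
  have h := c.map_mul_add g 1 1
  simp only [mul_one] at h
  rw [← c.map_one_one]
  exact add_right_cancel h

theorem map_inv_left (g : G) : c (g⁻¹, g) = c (g, g⁻¹) := by
  have h := c.map_mul_add g g⁻¹ g
  rwa [mul_inv_cancel, inv_mul_cancel, map_one_left, map_one_right, zero_add, add_zero,
    eq_comm] at h

def comap {H : Type*} [Group H] (π : H →* G) : NormCocycle₂ H A where
  toFun x := c (π x.1, π x.2)
  map_mul_add g h k := by simpa only [map_mul] using c.map_mul_add (π g) (π h) (π k)
  map_one_one := by simpa only [map_one] using c.map_one_one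

theorem comap_apply {H : Type*} [Group H] (π : H →* G) (x : H × H) :
    c.comap π x = c (π x.1, π x.2) := rfl

def ofMemCocycles₂ {k : Type u} [CommRing k] [Module k A] (f : G × G → A)
    (hf : f ∈ cocycles₂ (Rep.trivial k G A)) : NormCocycle₂ G A where
  toFun x := f x - f (1, 1)
  map_mul_add g h j := by
    have := (mem_cocycles₂_iff (A := Rep.trivial k G A) f).1 hf g h j
    rw [Rep.trivial_ρ_apply] at this
    linear_combination (norm := abel) this
  map_one_one := sub_self _

theorem ofMemCocycles₂_apply {k : Type u} [CommRing k] [Module k A] (f : G × G → A)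
    (hf : f ∈ cocycles₂ (Rep.trivial k G A)) (x : G × G) :
    ofMemCocycles₂ f hf x = f x - f (1, 1) := rfl

def Extension (_c : NormCocycle₂ G A) : Type _ := A × G

instance : Group c.Extension where
  mul x y := (x.1 + y.1 + c (x.2, y.2), x.2 * y.2)
  one := (0, 1)
  inv x := (-x.1 - c (x.2, x.2⁻¹), x.2⁻¹)
  mul_assoc x y z := Prod.ext (by
    show x.1 + y.1 + c (x.2, y.2) + z.1 + c (x.2 * y.2, z.2)
      = x.1 + (y.1 + z.1 + c (y.2, z.2)) + c (x.2, y.2 * z.2)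
    linear_combination (norm := abel) c.map_mul_add x.2 y.2 z.2) (mul_assoc x.2 y.2 z.2)
  one_mul x := Prod.ext (by
    show 0 + x.1 + c (1, x.2) = x.1
    rw [map_one_left, zero_add, add_zero]) (one_mul x.2)
  mul_one x := Prod.ext (by
    show x.1 + 0 + c (x.2, 1) = x.1
    rw [map_one_right, add_zero, add_zero]) (mul_one x.2)
  inv_mul_cancel x := Prod.ext (by
    show -x.1 - c (x.2, x.2⁻¹) + x.1 + c (x.2⁻¹, x.2) = 0
    rw [map_inv_left]
    abel) (inv_mul_cancel x.2)

namespace Extension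

variable {c}

theorem ext {x y : c.Extension} (h₁ : x.1 = y.1) (h₂ : x.2 = y.2) : x = y := Prod.ext h₁ h₂

@[simp] theorem fst_mul (x y : c.Extension) : (x * y).1 = x.1 + y.1 + c (x.2, y.2) := rfl

@[simp] theorem snd_mul (x y : c.Extension) : (x * y).2 = x.2 * y.2 := rfl

@[simp] theorem snd_one : (1 : c.Extension).2 = 1 := rfl

@[simp] theorem snd_inv (x : c.Extension) : x⁻¹.2 = x.2⁻¹ := rfl

variable (c) in
def proj : c.Extension →* G where
  toFun x := x.2
  map_one' := rfl
  map_mul' _ _ := rfl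

@[simp] theorem proj_apply (y : c.Extension) : proj c y = y.2 := rfl

theorem snd_list_prod (l : List c.Extension) : l.prod.2 = (l.map (proj c)).prod :=
  map_list_prod (proj c) l

@[simp] theorem snd_pow (x : c.Extension) (k : ℕ) : (x ^ k).2 = x.2 ^ k :=
  map_pow (proj c) x k

variable (c) in
def ι (u : A) : c.Extension := (u, 1)

@[simp] theorem fst_ι (u : A) : (ι c u).1 = u := rfl

@[simp] theorem snd_ι (u : A) : (ι c u).2 = 1 := rfl

theorem ι_mul_ι (u v : A) : ι c u * ι c v = ι c (u + v) :=
  ext (by simp) (mul_one 1)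

@[simp] theorem ι_zero : ι c 0 = 1 := rfl

theorem ι_commute (u : A) (y : c.Extension) : Commute (ι c u) y :=
  ext (by simp [add_comm u]) (by simp)

theorem mul_ι_mul (u : A) (y z : c.Extension) : y * (ι c u * z) = ι c u * (y * z) := by
  rw [← mul_assoc, ← (ι_commute u y).eq, mul_assoc]

theorem ι_mul_ι_mul (u v : A) (y : c.Extension) : ι c u * (ι c v * y) = ι c (u + v) * y := by
  rw [← mul_assoc, ι_mul_ι]

theorem ι_pow (u : A) (k : ℕ) : ι c u ^ k = ι c (k • u) := by
  induction k with
  | zero => simp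
  | succ k ih => rw [pow_succ, ih, ι_mul_ι, succ_nsmul]

theorem fst_ι_mul (u : A) (y : c.Extension) : (ι c u * y).1 = u + y.1 := by
  simp

theorem eq_ι_of_snd_eq_one {y : c.Extension} (h : y.2 = 1) : y = ι c y.1 := ext rfl h

theorem list_prod_map_ι_mul {κ : Type*} (w : κ → A) (b : κ → c.Extension) (l : List κ) :
    (l.map fun i => ι c (w i) * b i).prod = ι c (l.map w).sum * (l.map b).prod := by
  induction l with
  | nil => simp
  | cons i t ih =>
    simp only [List.map_cons, List.prod_cons, List.sum_cons]
    rw [mul_assoc, ih, mul_ι_mul, ι_mul_ι_mul]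

theorem list_prod_map_mul {κ : Type*} {a : c.Extension} {b : κ → c.Extension} {w : κ → A}
    (h : ∀ i, b i * a = ι c (w i) * (a * b i)) (l : List κ) :
    (l.map b).prod * a = ι c (l.map w).sum * (a * (l.map b).prod) := by
  induction l with
  | nil => simp
  | cons i t ih =>
    simp only [List.map_cons, List.prod_cons, List.sum_cons]
    rw [mul_assoc, ih, ← mul_assoc, ← (ι_commute _ (b i)).eq, mul_assoc, ← mul_assoc (b i), h,
      mul_assoc, ι_mul_ι_mul, mul_assoc, add_comm]

theorem list_prod_map_mul_list_prod_map {κ : Type*} {b b' : κ → c.Extension}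
    {W : κ → κ → A} (h : ∀ i j, b j * b' i = ι c (W i j) * (b' i * b j)) (l : List κ) :
    (l.map b).prod * (l.map b').prod
      = ι c (orderedPairSum W l) * (l.map fun i => b i * b' i).prod := by
  induction l with
  | nil => simp [orderedPairSum]
  | cons i t ih =>
    simp only [List.map_cons, List.prod_cons, orderedPairSum]
    calc b i * (t.map b).prod * (b' i * (t.map b').prod)
        = b i * ((t.map b).prod * b' i * (t.map b').prod) := by simp only [mul_assoc]
      _ = ι c (t.map (W i)).sum * (b i * b' i * ((t.map b).prod * (t.map b').prod)) := by
          rw [list_prod_map_mul (h i), mul_assoc, mul_ι_mul]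
          simp only [mul_assoc]
      _ = _ := by rw [ih, mul_ι_mul, ι_mul_ι_mul]

end Extension

theorem exists_coboundary_of_mul_section {s : G → c.Extension} (hs : ∀ g, (s g).2 = g)
    {B : G → G → A} (hB : ∀ g h, s g * s h = Extension.ι c (B g h) * s (g * h)) :
    ∃ φ : G → A, ∀ g h, c (g, h) = B g h + (φ h - φ (g * h) + φ g) := by
  refine ⟨fun g => -(s g).1, fun g h => ?_⟩
  have := congrArg Prod.fst (hB g h)
  rw [Extension.fst_mul, Extension.fst_ι_mul, hs, hs, ← eq_sub_iff_add_eq'] at this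
  rw [this]
  beta_reduce
  abel

end NormCocycle₂

theorem SemidirectProduct.pow_eq_one_of_right_eq_one {N d : ℕ}
    {φ : Multiplicative (ZMod 2) →* MulAut (Fin d → Multiplicative (ZMod N))}
    {y : (Fin d → Multiplicative (ZMod N)) ⋊[φ] Multiplicative (ZMod 2)} (hy : y.right = 1) :
    y ^ N = 1 := by
  have hv : y.left ^ N = 1 := funext fun i => by
    rw [Pi.pow_apply, ← ofAdd_toAdd (y.left i), ← ofAdd_nsmul, nsmul_eq_mul, ZMod.natCast_self,
      zero_mul, ofAdd_zero, Pi.one_apply]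
  rw [← inl_left_mul_inr_right y, hy, map_one, mul_one, ← map_pow, hv, map_one]

theorem Multiplicative.zmod_two_eq_one_or_eq_ofAdd_one :
    ∀ ε : Multiplicative (ZMod 2), ε = 1 ∨ ε = ofAdd 1 := by
  decide

def invAction (H : Type*) [CommGroup H] : Multiplicative (ZMod 2) →* MulAut H where
  toFun ε := MulEquiv.inv H ^ (toAdd ε).val
  map_one' := by simp
  map_mul' ε ε' := by
    have hsq : MulEquiv.inv H ^ 2 = 1 := by ext; simp [pow_two]
    rw [toAdd_mul, ZMod.val_add, ← pow_eq_pow_mod _ hsq, pow_add]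

theorem invAction_ofAdd_one {H : Type*} [CommGroup H] (a : H) :
    invAction H (ofAdd 1) a = a⁻¹ := by
  rw [invAction, MonoidHom.coe_mk, OneHom.coe_mk, toAdd_ofAdd,
    show (1 : ZMod 2).val = 1 from rfl, pow_one, MulEquiv.inv_apply]

theorem eq_invAction {H : Type*} [CommGroup H] {φ : Multiplicative (ZMod 2) →* MulAut H}
    (hφ : ∀ a, φ (ofAdd 1) a = a⁻¹) : φ = invAction H := by
  refine MonoidHom.ext fun ε => MulEquiv.ext fun a => ?_
  obtain rfl | rfl := Multiplicative.zmod_two_eq_one_or_eq_ofAdd_one ε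
  · simp
  · rw [hφ, invAction_ofAdd_one]

-- The paper's `A_2(n;d)` is `A₂ (2 ^ n) d`.
abbrev A₂ (N d : ℕ) : Type :=
  (Fin d → Multiplicative (ZMod N)) ⋊[invAction _] Multiplicative (ZMod 2)

namespace A₂

variable {N d : ℕ}

def e (i : Fin d) : A₂ N d := inl (Pi.mulSingle i (ofAdd 1))

def x : A₂ N d := inr (ofAdd 1)

def gen : Option (Fin d) → A₂ N d
  | none => x
  | some i => e i

theorem e_pow (i : Fin d) (k : ℕ) : e i ^ k = inl (Pi.mulSingle i (ofAdd (k : ZMod N))) := by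
  rw [e, ← map_pow, ← Pi.mulSingle_pow, ← ofAdd_nsmul, nsmul_one]

theorem e_pow_val [NeZero N] (i : Fin d) (t : ZMod N) :
    e i ^ t.val = inl (Pi.mulSingle i (ofAdd t)) := by
  rw [e_pow, ZMod.natCast_zmod_val]

theorem e_commute (i j : Fin d) : Commute (e i : A₂ N d) (e j) := by
  rw [Commute, SemiconjBy, e, e, ← map_mul, ← map_mul, mul_comm]

theorem x_mul_x : (x : A₂ N d) * x = 1 := by
  rw [x, ← map_mul]
  exact map_one _

theorem x_mul_e_mul_x_inv (i : Fin d) : x * e i * x⁻¹ = (e i : A₂ N d)⁻¹ := by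
  rw [x, e, ← map_inv, ← inl_aut, invAction_ofAdd_one, map_inv]

theorem x_pow_val (ε : Multiplicative (ZMod 2)) : (x : A₂ N d) ^ (toAdd ε).val = inr ε := by
  rw [x, ← map_pow, ← ofAdd_nsmul, nsmul_one, ZMod.natCast_zmod_val, ofAdd_toAdd]

theorem prod_e_pow_mul_x_pow [NeZero N] (g : A₂ N d) :
    ((List.finRange d).map fun i => e i ^ (toAdd (g.left i)).val).prod
      * x ^ (toAdd g.right).val = g := by
  simp_rw [e_pow_val, ofAdd_toAdd, x_pow_val]
  rw [show (fun i => (inl (Pi.mulSingle i (g.left i)) : A₂ N d))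
      = inl ∘ fun i => Pi.mulSingle i (g.left i) from rfl, ← List.map_map, ← map_list_prod,
    ← Fin.prod_univ_def,
    Finset.univ_prod_mulSingle, inl_left_mul_inr_right]

theorem closure_range_gen [NeZero N] : Subgroup.closure (Set.range (gen : _ → A₂ N d)) = ⊤ := by
  refine eq_top_iff.2 fun g _ => ?_
  rw [← prod_e_pow_mul_x_pow g]
  refine Subgroup.mul_mem _ (Subgroup.list_prod_mem _ fun y hy => ?_)
    (Subgroup.pow_mem _ (Subgroup.subset_closure (Set.mem_range_self none)) _)
  obtain ⟨i, -, rfl⟩ := List.mem_map.1 hy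
  exact Subgroup.pow_mem _ (Subgroup.subset_closure (Set.mem_range_self (some i))) _

def parity (a : Multiplicative (ZMod N)) : ZMod 2 := ZMod.cast (toAdd a)

theorem natCast_val_eq_parity [NeZero N] (a : Multiplicative (ZMod N)) :
    ((toAdd a).val : ZMod 2) = parity a :=
  ZMod.natCast_val _

theorem parity_mul (hN : 2 ∣ N) (a b : Multiplicative (ZMod N)) :
    parity (a * b) = parity a + parity b :=
  ZMod.cast_add hN _ _

theorem parity_invAction (hN : 2 ∣ N) (ε : Multiplicative (ZMod 2))
    (a : Fin d → Multiplicative (ZMod N)) (i : Fin d) :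
    parity (invAction _ ε a i) = parity (a i) := by
  obtain rfl | rfl := Multiplicative.zmod_two_eq_one_or_eq_ofAdd_one ε
  · rfl
  · rw [invAction_ofAdd_one, Pi.inv_apply, parity, toAdd_inv, ZMod.cast_neg hN,
      ZMod.neg_eq_self_mod_two]
    rfl

def coord : Option (Fin d) → A₂ N d → ZMod 2
  | none, g => toAdd g.right
  | some i, g => parity (g.left i)

theorem coord_mul (hN : 2 ∣ N) (α : Option (Fin d)) (g h : A₂ N d) :
    coord α (g * h) = coord α g + coord α h := by
  cases α with
  | none => exact toAdd_mul _ _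
  | some i => exact (parity_mul hN _ _).trans (congrArg _ (parity_invAction hN _ _ i))

theorem coord_gen (hN : 2 ∣ N) (α β : Option (Fin d)) :
    coord α (gen β : A₂ N d) = if α = β then 1 else 0 := by
  cases α <;> cases β <;> simp [coord, gen, x, e, parity, Pi.mulSingle_apply, ZMod.cast_one hN,
    apply_ite]

open NormCocycle₂ NormCocycle₂.Extension

variable (c : NormCocycle₂ (A₂ N d) (ZMod 2))

def liftE (i : Fin d) : c.Extension := ((0 : ZMod 2), e i)

def liftX : c.Extension := ((0 : ZMod 2), x)

@[simp] theorem fst_liftE (i : Fin d) : (liftE c i).1 = 0 := rfl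

@[simp] theorem snd_liftE (i : Fin d) : (liftE c i).2 = e i := rfl

@[simp] theorem fst_liftX : (liftX c).1 = 0 := rfl

@[simp] theorem snd_liftX : (liftX c).2 = x := rfl

def commVal (i j : Fin d) : ZMod 2 := c (e i, e j) - c (e j, e i)

def conjVal (i : Fin d) : ZMod 2 := (liftX c * liftE c i * (liftX c)⁻¹ * liftE c i).1

def sqVal : ZMod 2 := c (x, x)

theorem liftE_mul_liftE (i j : Fin d) :
    liftE c i * liftE c j = ι c (commVal c i j) * (liftE c j * liftE c i) :=
  Extension.ext (by simp [commVal]) (by simp [(e_commute i j).eq])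

theorem liftX_mul_liftE_mul_inv (i : Fin d) :
    liftX c * liftE c i * (liftX c)⁻¹ = ι c (conjVal c i) * (liftE c i)⁻¹ := by
  have h : liftX c * liftE c i * (liftX c)⁻¹ * liftE c i = ι c (conjVal c i) :=
    eq_ι_of_snd_eq_one (by simp [x_mul_e_mul_x_inv])
  rw [← h, mul_inv_cancel_right]

theorem liftX_mul_liftX : liftX c * liftX c = ι c (sqVal c) :=
  Extension.ext (by simp [sqVal, fst_ι]) x_mul_x

theorem liftE_pow_eq_one (hN : 2 ∣ N) {i : Fin d} (hc : c (e i ^ (N / 2), e i ^ (N / 2)) = 0) :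
    liftE c i ^ N = 1 := by
  have hsq : liftE c i ^ (N / 2) * liftE c i ^ (N / 2) = 1 := by
    refine Extension.ext ?_ ?_
    · simp only [fst_mul, snd_pow]
      rw [CharTwo.add_self_eq_zero, zero_add]
      exact hc
    · rw [snd_mul, snd_pow, snd_liftE, ← pow_add, ← two_mul, Nat.mul_div_cancel' hN, e_pow,
        ZMod.natCast_self, ofAdd_zero, Pi.mulSingle_one, map_one, snd_one]
  rwa [← pow_add, ← two_mul, Nat.mul_div_cancel' hN] at hsq

variable {c}

theorem liftE_pow_val_add [NeZero N] (ha : ∀ i, liftE c i ^ N = 1) (i : Fin d) (a b : ZMod N) :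
    liftE c i ^ (a + b).val = liftE c i ^ a.val * liftE c i ^ b.val := by
  rw [ZMod.val_add, ← pow_eq_pow_mod _ (ha i), pow_add]

theorem liftE_pow_val_neg [NeZero N] (ha : ∀ i, liftE c i ^ N = 1) (i : Fin d) (a : ZMod N) :
    liftE c i ^ (-a).val = (liftE c i ^ a.val)⁻¹ := by
  rw [eq_inv_iff_mul_eq_one, ← liftE_pow_val_add ha, neg_add_cancel, ZMod.val_zero, pow_zero]

variable (c) in
def liftLeft (a : Fin d → Multiplicative (ZMod N)) : c.Extension :=
  ((List.finRange d).map fun i => liftE c i ^ (toAdd (a i)).val).prod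

theorem liftLeft_mul [NeZero N] (ha : ∀ i, liftE c i ^ N = 1)
    (a b : Fin d → Multiplicative (ZMod N)) :
    liftLeft c a * liftLeft c b
      = ι c (orderedPairSum (fun i j => parity (a j) * parity (b i) * commVal c j i)
          (List.finRange d)) * liftLeft c (a * b) := by
  have hW : ∀ i j, liftE c j ^ (toAdd (a j)).val * liftE c i ^ (toAdd (b i)).val
      = ι c (parity (a j) * parity (b i) * commVal c j i)
        * (liftE c i ^ (toAdd (b i)).val * liftE c j ^ (toAdd (a j)).val) := fun i j => by
    rw [pow_mul_pow_eq_of_mul_eq (ι_commute _ _) (ι_commute _ _) (liftE_mul_liftE c j i), ι_pow,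
      nsmul_eq_mul, Nat.cast_mul, natCast_val_eq_parity, natCast_val_eq_parity]
  rw [liftLeft, liftLeft, list_prod_map_mul_list_prod_map hW]
  simp only [liftLeft, Pi.mul_apply, toAdd_mul, liftE_pow_val_add ha]

theorem liftX_pow_mul_liftLeft [NeZero N] (ha : ∀ i, liftE c i ^ N = 1)
    (ε : Multiplicative (ZMod 2)) (a : Fin d → Multiplicative (ZMod N)) :
    liftX c ^ (toAdd ε).val * liftLeft c a
      = ι c (toAdd ε * ∑ i, parity (a i) * conjVal c i)
          * (liftLeft c (invAction _ ε a) * liftX c ^ (toAdd ε).val) := by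
  obtain rfl | rfl := Multiplicative.zmod_two_eq_one_or_eq_ofAdd_one ε
  · simp
  have hconj : ∀ i, liftX c * liftE c i ^ (toAdd (a i)).val * (liftX c)⁻¹
      = ι c (parity (a i) * conjVal c i) * liftE c i ^ (toAdd (a⁻¹ i)).val := by
    intro i
    rw [← conj_pow, liftX_mul_liftE_mul_inv, (ι_commute _ _).mul_pow, ι_pow, nsmul_eq_mul,
      natCast_val_eq_parity, inv_pow, Pi.inv_apply, toAdd_inv, liftE_pow_val_neg ha]
  have hprod : liftX c * liftLeft c a * (liftX c)⁻¹
      = ((List.finRange d).map fun i =>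
          liftX c * liftE c i ^ (toAdd (a i)).val * (liftX c)⁻¹).prod := by
    rw [liftLeft, ← MulAut.conj_apply, map_list_prod, List.map_map]
    rfl
  rw [toAdd_ofAdd, show (1 : ZMod 2).val = 1 from rfl, pow_one, one_mul, invAction_ofAdd_one,
    ← inv_mul_cancel_right (liftX c * liftLeft c a) (liftX c), hprod,
    List.map_congr_left fun i _ => hconj i, list_prod_map_ι_mul, Fin.sum_univ_def, mul_assoc]
  rfl

theorem liftX_pow_mul_liftX_pow (ε ε' : Multiplicative (ZMod 2)) :
    liftX c ^ (toAdd ε).val * liftX c ^ (toAdd ε').val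
      = ι c (sqVal c * (toAdd ε * toAdd ε')) * liftX c ^ (toAdd (ε * ε')).val := by
  obtain rfl | rfl := Multiplicative.zmod_two_eq_one_or_eq_ofAdd_one ε <;>
  obtain rfl | rfl := Multiplicative.zmod_two_eq_one_or_eq_ofAdd_one ε'
  all_goals simp
  rw [show (1 : ZMod 2).val = 1 from rfl, show (1 + 1 : ZMod 2).val = 0 from rfl, pow_one, pow_zero,
    mul_one, liftX_mul_liftX]

variable (c) in
def lift (g : A₂ N d) : c.Extension := liftLeft c g.left * liftX c ^ (toAdd g.right).val

theorem snd_lift [NeZero N] (g : A₂ N d) : (lift c g).2 = g := by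
  rw [lift, snd_mul, snd_pow, snd_liftX, liftLeft, snd_list_prod, List.map_map]
  simp only [Function.comp_def, proj_apply, snd_pow, snd_liftE]
  exact prod_e_pow_mul_x_pow g

variable (c) in
def form (g h : A₂ N d) : ZMod 2 :=
  sqVal c * (coord none g * coord none h) + coord none g * ∑ i, coord (some i) h * conjVal c i
    + orderedPairSum (fun i j => coord (some j) g * coord (some i) h * commVal c j i)
        (List.finRange d)

theorem lift_mul [NeZero N] (hN : 2 ∣ N) (ha : ∀ i, liftE c i ^ N = 1) (g h : A₂ N d) :
    lift c g * lift c h = ι c (form c g h) * lift c (g * h) := by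
  have hpar : (fun i j => parity (g.left j) * parity (invAction _ g.right h.left i) * commVal c j i)
      = fun i j => coord (some j) g * coord (some i) h * commVal c j i := by
    simp only [parity_invAction hN]
    rfl
  calc lift c g * lift c h
      = liftLeft c g.left * (liftX c ^ (toAdd g.right).val * liftLeft c h.left)
          * liftX c ^ (toAdd h.right).val := by simp only [lift, mul_assoc]
    _ = ι c (toAdd g.right * ∑ i, parity (h.left i) * conjVal c i)
          * (liftLeft c g.left * liftLeft c (invAction _ g.right h.left)
            * (liftX c ^ (toAdd g.right).val * liftX c ^ (toAdd h.right).val)) := by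
      rw [liftX_pow_mul_liftLeft ha, mul_ι_mul]
      simp only [mul_assoc]
    _ = ι c (toAdd g.right * ∑ i, parity (h.left i) * conjVal c i)
          * (ι c (orderedPairSum (fun i j => coord (some j) g * coord (some i) h * commVal c j i)
              (List.finRange d)) * liftLeft c (g * h).left
            * (ι c (sqVal c * (toAdd g.right * toAdd h.right))
              * liftX c ^ (toAdd (g * h).right).val)) := by
      rw [liftLeft_mul ha, liftX_pow_mul_liftX_pow, hpar, ← mul_left, ← mul_right]
    _ = ι c (form c g h) * lift c (g * h) := by
      rw [mul_assoc (ι c _), mul_ι_mul (sqVal c * _) (liftLeft c _), ι_mul_ι_mul, ι_mul_ι_mul]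
      congr 2
      simp only [form, coord]
      ring

variable (c) in
theorem form_mul_left (hN : 2 ∣ N) (g g' h : A₂ N d) :
    form c (g * g') h = form c g h + form c g' h := by
  simp only [form, coord_mul hN, add_mul, orderedPairSum_add]
  ring

variable (c) in
theorem form_mul_right (hN : 2 ∣ N) (g h h' : A₂ N d) :
    form c g (h * h') = form c g h + form c g h' := by
  simp only [form, coord_mul hN, mul_add, add_mul, orderedPairSum_add, Finset.sum_add_distrib]
  ring

variable (c) in
theorem exists_bimul_add_coboundary [NeZero N] (hN : 2 ∣ N)
    (hc : ∀ i, c (e i ^ (N / 2), e i ^ (N / 2)) = 0) :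
    ∃ B : A₂ N d → A₂ N d → ZMod 2,
      (∀ g g' h, B (g * g') h = B g h + B g' h) ∧ (∀ g h h', B g (h * h') = B g h + B g h') ∧
      ∃ φ : A₂ N d → ZMod 2, ∀ g h, c (g, h) = B g h + (φ h - φ (g * h) + φ g) :=
  ⟨form c, form_mul_left c hN, form_mul_right c hN,
    c.exists_coboundary_of_mul_section snd_lift
      (lift_mul hN fun i => liftE_pow_eq_one c hN (hc i))⟩

end A₂

theorem stmt17_general (n d : ℕ)
    (φn : Multiplicative (ZMod 2) →* MulAut (Fin d → Multiplicative (ZMod (2 ^ n))))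
    (φn1 : Multiplicative (ZMod 2) →* MulAut (Fin d → Multiplicative (ZMod (2 ^ (n + 1)))))
    (hφn1 : ∀ y, φn1 (Multiplicative.ofAdd 1) y = y⁻¹)
    (π : ((Fin d → Multiplicative (ZMod (2 ^ (n + 1)))) ⋊[φn1] Multiplicative (ZMod 2)) →*
         ((Fin d → Multiplicative (ZMod (2 ^ n))) ⋊[φn] Multiplicative (ZMod 2)))
    (hπ : ∀ x, π x =
      ⟨fun i => Multiplicative.ofAdd
          (ZMod.castHom (pow_dvd_pow 2 (Nat.le_succ n)) (ZMod (2 ^ n)) (x.left i).toAdd),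
        x.right⟩) :
    ∀ f : ((Fin d → Multiplicative (ZMod (2 ^ n))) ⋊[φn] Multiplicative (ZMod 2)) ×
          ((Fin d → Multiplicative (ZMod (2 ^ n))) ⋊[φn] Multiplicative (ZMod 2)) → ZMod 2,
      f ∈ cocycles₂
        (trivRep 2 ((Fin d → Multiplicative (ZMod (2 ^ n))) ⋊[φn] Multiplicative (ZMod 2))) →
      ∃ (ℓ : ℕ)
        (χ ψ : Fin ℓ →
          ((Fin d → Multiplicative (ZMod (2 ^ (n + 1)))) ⋊[φn1] Multiplicative (ZMod 2)) →
            ZMod 2),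
        (∀ i, (∀ a b, χ i (a * b) = χ i a + χ i b) ∧ (∀ a b, ψ i (a * b) = ψ i a + ψ i b)) ∧
        ∃ φ' : ((Fin d → Multiplicative (ZMod (2 ^ (n + 1)))) ⋊[φn1]
            Multiplicative (ZMod 2)) → ZMod 2,
          (fun x : ((Fin d → Multiplicative (ZMod (2 ^ (n + 1)))) ⋊[φn1]
                     Multiplicative (ZMod 2)) ×
                   ((Fin d → Multiplicative (ZMod (2 ^ (n + 1)))) ⋊[φn1]
                     Multiplicative (ZMod 2)) =>
            f (π x.1, π x.2)) =
          (fun x => ∑ i, χ i x.1 * ψ i x.2) +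
            (d₁₂ (trivRep 2 ((Fin d → Multiplicative (ZMod (2 ^ (n + 1)))) ⋊[φn1]
              Multiplicative (ZMod 2)))).hom φ' := by
  intro f hf
  obtain rfl := eq_invAction hφn1
  have hN : 2 ∣ 2 ^ (n + 1) := dvd_pow_self 2 n.succ_ne_zero
  let c : NormCocycle₂ (A₂ (2 ^ (n + 1)) d) (ZMod 2) :=
    (NormCocycle₂.ofMemCocycles₂ f hf).comap π
  have hc : ∀ i, c (A₂.e i ^ (2 ^ (n + 1) / 2), A₂.e i ^ (2 ^ (n + 1) / 2)) = 0 := fun i => by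
    have hπe : π (A₂.e i ^ (2 ^ (n + 1) / 2)) = 1 := by
      rw [map_pow, show 2 ^ (n + 1) / 2 = 2 ^ n by rw [pow_succ, Nat.mul_div_cancel _ two_pos]]
      exact pow_eq_one_of_right_eq_one (by rw [hπ]; rfl)
    rw [NormCocycle₂.comap_apply, hπe, NormCocycle₂.ofMemCocycles₂_apply, sub_self]
  obtain ⟨B, hB₁, hB₂, φ, hcB⟩ := A₂.exists_bimul_add_coboundary c hN hc
  obtain ⟨ℓ, χ, ψ, hχψ, hB⟩ :=
    exists_fin_sum_mul_of_bimul A₂.closure_range_gen (A₂.coord_mul hN) (A₂.coord_gen hN) hB₁ hB₂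
  refine ⟨ℓ, χ, ψ, hχψ, fun g => φ g + f (1, 1), funext fun x => ?_⟩
  have hfc : f (π x.1, π x.2) = c x + f (1, 1) := by
    rw [NormCocycle₂.comap_apply, NormCocycle₂.ofMemCocycles₂_apply, sub_add_cancel]
  rw [hfc, hcB, hB]
  simp only [Pi.add_apply, d₁₂_hom_apply, trivRep, Representation.trivial_apply]
  ring

/-- Under inflation along the natural surjection `A₂(n+1;d) → A₂(n;d)` (where
`A₂(n;d) = (Z/2ⁿ)ᵈ ⋊ Z/2` with the inversion action), every degree-two cohomology class fully
decomposes: its image is, up to a coboundary, a finite sum of cup products of two degree-one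
classes. -/
theorem stmt17 (n d : ℕ) (hn : 2 ≤ n) (hd : 1 ≤ d)
    (φn : Multiplicative (ZMod 2) →* MulAut (Fin d → Multiplicative (ZMod (2 ^ n))))
    (hφn : ∀ y, φn (Multiplicative.ofAdd 1) y = y⁻¹)
    (φn1 : Multiplicative (ZMod 2) →* MulAut (Fin d → Multiplicative (ZMod (2 ^ (n + 1)))))
    (hφn1 : ∀ y, φn1 (Multiplicative.ofAdd 1) y = y⁻¹)
    (π : ((Fin d → Multiplicative (ZMod (2 ^ (n + 1)))) ⋊[φn1] Multiplicative (ZMod 2)) →*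
         ((Fin d → Multiplicative (ZMod (2 ^ n))) ⋊[φn] Multiplicative (ZMod 2)))
    (hπ : ∀ x, π x =
      ⟨fun i => Multiplicative.ofAdd
          (ZMod.castHom (pow_dvd_pow 2 (Nat.le_succ n)) (ZMod (2 ^ n)) (x.left i).toAdd),
        x.right⟩) :
    ∀ f : ((Fin d → Multiplicative (ZMod (2 ^ n))) ⋊[φn] Multiplicative (ZMod 2)) ×
          ((Fin d → Multiplicative (ZMod (2 ^ n))) ⋊[φn] Multiplicative (ZMod 2)) → ZMod 2,
      f ∈ cocycles₂
        (trivRep 2 ((Fin d → Multiplicative (ZMod (2 ^ n))) ⋊[φn] Multiplicative (ZMod 2))) →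
      ∃ (ℓ : ℕ)
        (χ ψ : Fin ℓ →
          ((Fin d → Multiplicative (ZMod (2 ^ (n + 1)))) ⋊[φn1] Multiplicative (ZMod 2)) →
            ZMod 2),
        (∀ i, (∀ a b, χ i (a * b) = χ i a + χ i b) ∧ (∀ a b, ψ i (a * b) = ψ i a + ψ i b)) ∧
        ∃ φ' : ((Fin d → Multiplicative (ZMod (2 ^ (n + 1)))) ⋊[φn1]
            Multiplicative (ZMod 2)) → ZMod 2,
          (fun x : ((Fin d → Multiplicative (ZMod (2 ^ (n + 1)))) ⋊[φn1]
                     Multiplicative (ZMod 2)) ×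
                   ((Fin d → Multiplicative (ZMod (2 ^ (n + 1)))) ⋊[φn1]
                     Multiplicative (ZMod 2)) =>
            f (π x.1, π x.2)) =
          (fun x => ∑ i, χ i x.1 * ψ i x.2) +
            (d₁₂ (trivRep 2 ((Fin d → Multiplicative (ZMod (2 ^ (n + 1)))) ⋊[φn1]
              Multiplicative (ZMod 2)))).hom φ' :=
  stmt17_general n d φn φn1 hφn1 π hπ
end
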